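/- Let p ∈ [0,1], M ≥ 1, and q : ℕ → [0,1] with q M = 1. Define m : ℕ → ℝ by m 0 = 0 and m i = q i + p·(1 - q i)·m (i-1) for 1 ≤ i ≤ M, and define P(i) = p^(M-i) · q i · (1 - p · m (i-1)) for i ∈ {1,...,M}. Then ∑_{i=1}^{M} P(i) = 1. -/
import Mathlib


theorem stmt_4 (p : ℝ) (hp : p ∈ Set.Icc (0:ℝ) 1) (M : ℕ) (hM : 1 ≤ M)
    (q : ℕ → ℝ) (hq : ∀ i, q i ∈ Set.Icc (0:ℝ) 1) (hqM : q M = 1)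
    (m : ℕ → ℝ) (hm0 : m 0 = 0)
    (hmrec : ∀ i, 1 ≤ i → i ≤ M → m i = q i + p * (1 - q i) * m (i - 1))
    (P : ℕ → ℝ)
    (hP : ∀ i, 1 ≤ i → i ≤ M → P i = p ^ (M - i) * q i * (1 - p * m (i - 1))) :
    ∑ i ∈ Finset.Icc 1 M, P i = 1 := by
  set f : ℕ → ℝ := fun j => p ^ (M - j) * m j with hf
  have key : ∀ j ∈ Finset.range M, P (j + 1) = f (j + 1) - f j := by
    intro j hj
    rw [Finset.mem_range] at hj
    have h1 : 1 ≤ j + 1 := Nat.le_add_left 1 j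
    have h2 : j + 1 ≤ M := hj
    have hm := hmrec (j + 1) h1 h2
    have hPj := hP (j + 1) h1 h2
    simp only [Nat.add_sub_cancel] at hm hPj
    have hq : q (j + 1) * (1 - p * m j) = m (j + 1) - p * m j := by
      rw [hm]; ring
    have hpow : p ^ (M - j) = p ^ (M - (j + 1)) * p := by
      rw [← pow_succ]
      congr 1
      omega
    rw [hPj, hf]
    simp only
    rw [mul_assoc, hq, hpow]
    ring
  have hIcc : ∑ i ∈ Finset.Icc 1 M, P i = ∑ j ∈ Finset.range M, P (j + 1) := by
    rw [← Finset.Ico_add_one_right_eq_Icc, Finset.sum_Ico_eq_sum_range]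
    simp [add_comm]
  rw [hIcc, Finset.sum_congr rfl key, Finset.sum_range_sub f]
  have hmM : m M = 1 := by
    have := hmrec M hM le_rfl
    rw [hqM] at this
    simpa using this
  simp [hf, hm0, hmM]
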